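/- For every integer m and nonnegative integer k: 2·∑_{j=0}^{k} j²·T_{j+m} = −3·T_{m−1} − 5·T_m − 6·T_{m+1} + (k²−2k+3)·T_{k+m−1} + (2k²−2k+5)·T_{k+m} + (k²−4k+6)·T_{k+m+1}. -/

import Mathlib

/-- Tribonacci numbers on the naturals. -/
def tribN : ℕ → ℤ
  | 0 => 0
  | 1 => 1
  | 2 => 1
  | n + 3 => tribN (n + 2) + tribN (n + 1) + tribN n

/-- Tribonacci at negative indices: `tribNeg n = T (-n)`, via `T (-n) = 2·T (3-n) - T (4-n)`. -/
def tribNeg : ℕ → ℤ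
  | 0 => tribN 0
  | 1 => 2 * tribN 2 - tribN 3
  | 2 => 2 * tribN 1 - tribN 2
  | 3 => 2 * tribN 0 - tribN 1
  | 4 => 2 * tribNeg 1 - tribN 0
  | n + 5 => 2 * tribNeg (n + 2) - tribNeg (n + 1)

/-- Tribonacci sequence extended to all integers. -/
def T (m : ℤ) : ℤ := if 0 ≤ m then tribN m.toNat else tribNeg (-m).toNat

/-!
Induction on `k`, valid for any integer-indexed sequence satisfying the Tribonacci recurrence:
the induction step is the recurrence at index `k + m - 1`, scaled by `k² - 2k + 3`.
The extended `T` satisfies the recurrence at every integer because, given the recurrence at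
`n + 1`, the extension rule `T n = 2 T (n + 3) - T (n + 4)` is equivalent to the recurrence at `n`.
-/

open Finset

lemma T_natCast (n : ℕ) : T n = tribN n := by simp [T]

lemma T_neg_natCast (n : ℕ) : T (-n) = tribNeg n := by
  rcases n with _ | n
  · rfl
  · rw [T, if_neg (by omega), show (-(-((n + 1 : ℕ) : ℤ))).toNat = n + 1 by omega]

lemma T_neg_natCast_eq_two_mul_sub (n : ℕ) : T (-n) = 2 * T (-n + 3) - T (-n + 4) := by
  match n with
  | 0 | 1 | 2 | 3 | 4 => decide
  | n + 5 =>
    rw [show -((n + 5 : ℕ) : ℤ) + 3 = -((n + 2 : ℕ) : ℤ) by push_cast; ring,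
      show -((n + 5 : ℕ) : ℤ) + 4 = -((n + 1 : ℕ) : ℤ) by push_cast; ring,
      T_neg_natCast, T_neg_natCast, T_neg_natCast, tribNeg]

lemma T_add_three (m : ℤ) : T (m + 3) = T m + T (m + 1) + T (m + 2) := by
  induction m using Int.induction_on with
  | zero => decide
  | succ i _ =>
    have h : tribN (i + 1 + 3) = tribN (i + 1) + tribN (i + 1 + 1) + tribN (i + 1 + 2) := by
      rw [tribN]; ring
    simpa only [← T_natCast, Nat.cast_add, Nat.cast_one, Nat.cast_ofNat] using h
  | pred i ih =>
    have h := T_neg_natCast_eq_two_mul_sub (i + 1)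
    push_cast at h
    ring_nf at h ih ⊢
    linear_combination ih - h

theorem two_mul_sum_sq_mul_of_tribonacci {R : Type*} [CommRing R] (f : ℤ → R)
    (hf : ∀ n, f (n + 3) = f n + f (n + 1) + f (n + 2)) (m : ℤ) (k : ℕ) :
    2 * ∑ j ∈ range (k + 1), (j : R) ^ 2 * f (j + m) =
      -3 * f (m - 1) - 5 * f m - 6 * f (m + 1) +
        ((k : R) ^ 2 - 2 * k + 3) * f (k + m - 1) +
        (2 * (k : R) ^ 2 - 2 * k + 5) * f (k + m) +
        ((k : R) ^ 2 - 4 * k + 6) * f (k + m + 1) := by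
  induction k with
  | zero => simp only [zero_add, range_one, sum_singleton, Nat.cast_zero]; ring
  | succ k ih =>
    have h := hf (k + m - 1)
    rw [show (k : ℤ) + m - 1 + 3 = k + m + 2 by ring, show (k : ℤ) + m - 1 + 1 = k + m by ring,
      show (k : ℤ) + m - 1 + 2 = k + m + 1 by ring] at h
    rw [sum_range_succ]
    push_cast
    rw [show (k : ℤ) + 1 + m - 1 = k + m by ring, show (k : ℤ) + 1 + m = k + m + 1 by ring,
      show (k : ℤ) + m + 1 + 1 = k + m + 2 by ring]
    linear_combination ih - ((k : R) ^ 2 - 2 * k + 3) * h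

theorem stmt14 : ∀ (m : ℤ) (k : ℕ),
    2 * ∑ j ∈ Finset.range (k + 1), (j : ℤ) ^ 2 * T (j + m) =
      -3 * T (m - 1) - 5 * T m - 6 * T (m + 1) +
        ((k : ℤ) ^ 2 - 2 * k + 3) * T (k + m - 1) +
        (2 * (k : ℤ) ^ 2 - 2 * k + 5) * T (k + m) +
        ((k : ℤ) ^ 2 - 4 * k + 6) * T (k + m + 1) :=
  two_mul_sum_sq_mul_of_tribonacci T T_add_three
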